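/- arXiv:1502.01671 — 3 statements merged into one kernel-verified Lean document; each statement's English description precedes it below -/
import Mathlib

section
/- In ℝ² with ξ = (ξ₁, ξ₂), the following identity of meromorphic functions holds: 1/((1-e^{ξ₁})(1-e^{ξ₁+ξ₂})) has homogeneous degree-0 part of its Laurent expansion at 0 equal to 1/4 + (1/12)(ξ₁+ξ₂)/ξ₁ + (1/12) ξ₁/(ξ₁+ξ₂), and this also equals 3/8 + (1/12) ξ₂/ξ₁ + (1/24)(ξ₁-ξ₂)/(ξ₁+ξ₂). -/
/-!
The Todd series `w / (e^w - 1) = ∑ Bₙ wⁿ / n!` converges near `0` (the recursion for the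
Bernoulli numbers gives `|Bₙ| / n! ≤ 2ⁿ`), and
`z² S(zξ) = (ξ₁ (ξ₁ + ξ₂))⁻¹ · (zξ₁ / (e^{zξ₁} - 1)) · (z(ξ₁ + ξ₂) / (e^{z(ξ₁ + ξ₂)} - 1))`.
So `z² S(zξ)` is the Cauchy product of two rescaled Todd series divided by `ξ₁ (ξ₁ + ξ₂)`, and its
`z²`-coefficient is `((B₂ / 2)(u² + v²) + B₁² u v) / (u v)` with `u = ξ₁`, `v = ξ₁ + ξ₂`.
-/

open PowerSeries Finset
open scoped Nat

theorem PowerSeries.hasSum_coeff_mul_mul_pow {R : Type*} [NormedCommRing R] [CompleteSpace R]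
    {f g : PowerSeries R} {w : R}
    (hf : Summable fun n => ‖coeff n f * w ^ n‖) (hg : Summable fun n => ‖coeff n g * w ^ n‖) :
    HasSum (fun n => coeff n (f * g) * w ^ n)
      ((∑' n, coeff n f * w ^ n) * ∑' n, coeff n g * w ^ n) := by
  have hcauchy : (fun n => coeff n (f * g) * w ^ n) = fun n =>
      ∑ kl ∈ antidiagonal n, (coeff kl.1 f * w ^ kl.1) * (coeff kl.2 g * w ^ kl.2) := by
    ext n
    rw [coeff_mul, sum_mul]
    refine sum_congr rfl fun kl hkl => ?_
    rw [← mem_antidiagonal.mp hkl, pow_add]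
    ring
  rw [hcauchy, tsum_mul_tsum_eq_tsum_sum_antidiagonal_of_summable_norm hf hg]
  exact (summable_norm_sum_mul_antidiagonal_of_summable_norm hf hg).of_norm.hasSum

theorem sum_range_bernoulli_div_factorial_div_factorial (n : ℕ) :
    ∑ k ∈ range (n + 1), bernoulli k / k ! / (n - k + 1)! = if n = 0 then 1 else 0 := by
  have h := congrArg (coeff (n + 1)) (bernoulliPowerSeries_mul_exp_sub_one ℚ)
  rw [coeff_mul, Nat.sum_antidiagonal_succ', Nat.sum_antidiagonal_eq_sum_range_succ_mk] at h
  simpa [bernoulliPowerSeries, coeff_X, Nat.factorial_succ, div_eq_mul_inv, mul_comm, mul_assoc,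
    mul_left_comm] using h

theorem bernoulli_succ_div_factorial (n : ℕ) :
    bernoulli (n + 1) / (n + 1)! = -∑ k ∈ range (n + 1), bernoulli k / k ! / (n + 2 - k)! := by
  have h := sum_range_bernoulli_div_factorial_div_factorial (n + 1)
  rw [sum_range_succ, if_neg n.succ_ne_zero, Nat.sub_self, zero_add, Nat.factorial_one,
    Nat.cast_one, div_one] at h
  rw [eq_neg_iff_add_eq_zero, add_comm, ← h]
  congr 1
  refine sum_congr rfl fun k hk => ?_
  rw [show n + 1 - k + 1 = n + 2 - k by have := mem_range.mp hk; omega]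

theorem abs_bernoulli_div_factorial_le (n : ℕ) : |bernoulli n / n !| ≤ 2 ^ n := by
  induction n using Nat.strong_induction_on with
  | _ n ih =>
    rcases n with _ | n
    · simp
    have hterm : ∀ k ∈ range (n + 1), |bernoulli k / k ! / (n + 2 - k)!| ≤ 2 ^ k / 2 := by
      intro k hk
      have hk := mem_range.mp hk
      have hfact : (2 : ℚ) ≤ (n + 2 - k)! := by
        exact_mod_cast (show 2 ≤ n + 2 - k by omega).trans (Nat.self_le_factorial _)
      rw [abs_div, Nat.abs_cast]
      exact div_le_div₀ (by positivity) (ih k (by omega)) (by norm_num) hfact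
    calc |bernoulli (n + 1) / (n + 1)!|
        ≤ ∑ k ∈ range (n + 1), |bernoulli k / k ! / (n + 2 - k)!| := by
          rw [bernoulli_succ_div_factorial, abs_neg]
          exact abs_sum_le_sum_abs _ _
      _ ≤ ∑ k ∈ range (n + 1), (2 : ℚ) ^ k / 2 := sum_le_sum hterm
      _ ≤ 2 ^ (n + 1) := by
          rw [← sum_div, geom_sum_eq (by norm_num)]
          linarith [pow_pos (two_pos (α := ℚ)) (n + 1)]

theorem summable_norm_coeff_bernoulliPowerSeries_mul_pow {w : ℂ} (hw : ‖w‖ < 1 / 2) :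
    Summable fun n => ‖coeff n (bernoulliPowerSeries ℂ) * w ^ n‖ := by
  refine (summable_geometric_of_lt_one (by positivity) (by linarith : 2 * ‖w‖ < 1)).of_nonneg_of_le
    (fun n => norm_nonneg _) fun n => ?_
  rw [bernoulliPowerSeries, coeff_mk, eq_ratCast, norm_mul, norm_pow, Complex.norm_ratCast, mul_pow]
  gcongr
  exact_mod_cast abs_bernoulli_div_factorial_le n

theorem hasSum_coeff_exp_mul_pow (w : ℂ) :
    HasSum (fun n => coeff n (exp ℂ) * w ^ n) (Complex.exp w) := by
  simpa [coeff_exp, div_eq_inv_mul, Complex.exp_eq_exp_ℂ] using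
    NormedSpace.expSeries_div_hasSum_exp w

theorem summable_norm_coeff_exp_mul_pow (w : ℂ) :
    Summable fun n => ‖coeff n (exp ℂ) * w ^ n‖ := by
  convert Real.summable_pow_div_factorial ‖w‖ using 2 with n
  simp [coeff_exp, div_eq_inv_mul]

theorem hasSum_coeff_bernoulliPowerSeries_mul_pow {w : ℂ} (hw0 : w ≠ 0) (hw : ‖w‖ < 1 / 2) :
    HasSum (fun n => coeff n (bernoulliPowerSeries ℂ) * w ^ n) (w / (Complex.exp w - 1)) := by
  have hB := (summable_norm_coeff_bernoulliPowerSeries_mul_pow hw).of_norm.hasSum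
  set S := ∑' n, coeff n (bernoulliPowerSeries ℂ) * w ^ n
  have hX : HasSum (fun n => coeff n (X : ℂ⟦X⟧) * w ^ n) (S * (Complex.exp w - 1)) := by
    have h := (hasSum_coeff_mul_mul_pow (summable_norm_coeff_bernoulliPowerSeries_mul_pow hw)
      (summable_norm_coeff_exp_mul_pow w)).sub hB
    rw [(hasSum_coeff_exp_mul_pow w).tsum_eq, ← mul_sub_one] at h
    simpa only [← sub_mul, ← map_sub, ← mul_sub_one, bernoulliPowerSeries_mul_exp_sub_one] using h
  have hSw : S * (Complex.exp w - 1) = w := by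
    refine hX.unique ?_
    convert hasSum_ite_eq 1 w using 2 with n
    rcases eq_or_ne n 1 with rfl | hn <;> simp [coeff_X, *]
  have hexp : Complex.exp w - 1 ≠ 0 := by
    rintro h
    rw [h, mul_zero] at hSw
    exact hw0 hSw.symm
  rwa [(div_eq_iff hexp).2 hSw.symm]

theorem PowerSeries.coeff_rescale_mul_pow {R : Type*} [CommSemiring R] (f : R⟦X⟧) (u z : R)
    (n : ℕ) : coeff n (rescale u f) * z ^ n = coeff n f * (z * u) ^ n := by
  rw [coeff_rescale, mul_pow]
  ring

theorem hasSum_coeff_rescale_mul_rescale_bernoulliPowerSeries_mul_pow {u v z : ℂ}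
    (hu0 : z * u ≠ 0) (hv0 : z * v ≠ 0) (hu : ‖z * u‖ < 1 / 2) (hv : ‖z * v‖ < 1 / 2) :
    HasSum (fun n => coeff n (rescale u (bernoulliPowerSeries ℂ) *
        rescale v (bernoulliPowerSeries ℂ)) * z ^ n)
      (z * u / (Complex.exp (z * u) - 1) * (z * v / (Complex.exp (z * v) - 1))) := by
  have hsum : ∀ {t : ℂ}, ‖z * t‖ < 1 / 2 →
      Summable fun n => ‖coeff n (rescale t (bernoulliPowerSeries ℂ)) * z ^ n‖ := fun ht => by
    simpa only [coeff_rescale_mul_pow] using summable_norm_coeff_bernoulliPowerSeries_mul_pow ht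
  have h := hasSum_coeff_mul_mul_pow (hsum hu) (hsum hv)
  simp only [coeff_rescale_mul_pow] at h
  rwa [(hasSum_coeff_bernoulliPowerSeries_mul_pow hu0 hu).tsum_eq,
    (hasSum_coeff_bernoulliPowerSeries_mul_pow hv0 hv).tsum_eq] at h

theorem coeff_two_rescale_mul_rescale_bernoulliPowerSeries {K : Type*} [Field K] [CharZero K]
    (u v : K) :
    coeff 2 (rescale u (bernoulliPowerSeries K) * rescale v (bernoulliPowerSeries K)) =
      u ^ 2 / 12 + u * v / 4 + v ^ 2 / 12 := by
  rw [coeff_mul, Nat.sum_antidiagonal_eq_sum_range_succ_mk]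
  simp only [sum_range_succ, sum_range_zero, coeff_rescale, bernoulliPowerSeries, coeff_mk,
    eq_ratCast, bernoulli_zero, bernoulli_one, bernoulli_two]
  norm_num [Nat.factorial]
  ring

/-- The degree-0 homogeneous component of the Laurent expansion at `0` of
`S(ξ) = 1/((1-e^{ξ₁})(1-e^{ξ₁+ξ₂}))` (generating function of the cone spanned by
`e₁` and `e₁+e₂`), expressed in two ways: it is the coefficient of `z²` in the
Taylor expansion of `z² S(zξ)`, and equals
`1/4 + (1/12)(ξ₁+ξ₂)/ξ₁ + (1/12)ξ₁/(ξ₁+ξ₂) = 3/8 + (1/12)ξ₂/ξ₁ + (1/24)(ξ₁-ξ₂)/(ξ₁+ξ₂)`. -/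
theorem stmt13 (ξ₁ ξ₂ : ℂ) (h1 : ξ₁ ≠ 0) (h2 : ξ₁ + ξ₂ ≠ 0) :
    (∃ (a : ℕ → ℂ) (r : ℝ), 0 < r ∧
      a 2 = 1 / 4 + (1 / 12) * ((ξ₁ + ξ₂) / ξ₁) + (1 / 12) * (ξ₁ / (ξ₁ + ξ₂)) ∧
      ∀ z : ℂ, ‖z‖ < r → z ≠ 0 →
        HasSum (fun m : ℕ => a m * z ^ m)
          (z ^ 2 *
            (1 / ((1 - Complex.exp (z * ξ₁)) * (1 - Complex.exp (z * (ξ₁ + ξ₂)))))))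
      ∧
    1 / 4 + (1 / 12) * ((ξ₁ + ξ₂) / ξ₁) + (1 / 12) * (ξ₁ / (ξ₁ + ξ₂)) =
      3 / 8 + (1 / 12) * (ξ₂ / ξ₁) + (1 / 24) * ((ξ₁ - ξ₂) / (ξ₁ + ξ₂)) := by
  have hsmall : ∀ {z u : ℂ}, u ≠ 0 → ‖z‖ < (2 * ‖u‖)⁻¹ → ‖z * u‖ < 1 / 2 := by
    intro z u hu hz
    rw [norm_mul, ← lt_div_iff₀ (norm_pos_iff.mpr hu)]
    simpa [div_eq_inv_mul, mul_comm] using hz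
  refine ⟨⟨fun m => (ξ₁ * (ξ₁ + ξ₂))⁻¹ * coeff m
      (rescale ξ₁ (bernoulliPowerSeries ℂ) * rescale (ξ₁ + ξ₂) (bernoulliPowerSeries ℂ)),
    min (2 * ‖ξ₁‖)⁻¹ (2 * ‖ξ₁ + ξ₂‖)⁻¹, by positivity, ?_, fun z hz hz0 => ?_⟩, by field_simp; ring⟩
  · dsimp only
    rw [coeff_two_rescale_mul_rescale_bernoulliPowerSeries]
    field_simp
    ring
  · have h := (hasSum_coeff_rescale_mul_rescale_bernoulliPowerSeries_mul_pow
      (mul_ne_zero hz0 h1) (mul_ne_zero hz0 h2) (hsmall h1 (hz.trans_le (min_le_left _ _)))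
      (hsmall h2 (hz.trans_le (min_le_right _ _)))).mul_left (ξ₁ * (ξ₁ + ξ₂))⁻¹
    have hval : z ^ 2 * (1 / ((1 - Complex.exp (z * ξ₁)) * (1 - Complex.exp (z * (ξ₁ + ξ₂))))) =
        (ξ₁ * (ξ₁ + ξ₂))⁻¹ * (z * ξ₁ / (Complex.exp (z * ξ₁) - 1) *
          (z * (ξ₁ + ξ₂) / (Complex.exp (z * (ξ₁ + ξ₂)) - 1))) := by
      rw [div_mul_div_comm, show (Complex.exp (z * ξ₁) - 1) * (Complex.exp (z * (ξ₁ + ξ₂)) - 1) =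
        (1 - Complex.exp (z * ξ₁)) * (1 - Complex.exp (z * (ξ₁ + ξ₂))) by ring]
      field_simp
    rw [hval]
    simpa only [mul_assoc] using h
end

section
/- Let c ⊂ V be a full-dimensional simplicial rational cone with primitive lattice edge generators v₁,…,v_d, and let v = v₁ be primitive. Then the residue of the discrete generating function along v satisfies Res_v S(a) := (⟨ξ,v⟩ S(a)(ξ))|_{v^⊥} = - S(proj_{V/v} a), where a = s + c is the affine cone with vertex s and proj_{V/v} is the projection to V/ℝv with the projected lattice. -/
open Filter

private lemma aux_gcd_mul {d : ℕ} (w0 : Fin d → ℤ) (t : ℝ)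
    (ht : ∀ i, ∃ m : ℤ, t * w0 i = m) :
    ∀ S : Finset (Fin d), ∃ m : ℤ, t * (S.gcd w0) = m := by
  intro S
  induction S using Finset.induction with
  | empty => exact ⟨0, by simp⟩
  | @insert a s ha ih =>
    obtain ⟨m1, hm1⟩ := ht a
    obtain ⟨m2, hm2⟩ := ih
    rw [Finset.gcd_insert]
    refine ⟨m1 * Int.gcdA (w0 a) (s.gcd w0) + m2 * Int.gcdB (w0 a) (s.gcd w0), ?_⟩
    have hg : gcd (w0 a) (s.gcd w0) =
        (w0 a) * Int.gcdA (w0 a) (s.gcd w0) + (s.gcd w0) * Int.gcdB (w0 a) (s.gcd w0) := by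
      rw [← Int.coe_gcd, Int.gcd_eq_gcd_ab]
    rw [hg]
    push_cast
    linear_combination (Int.gcdA (w0 a) (s.gcd w0) : ℝ) * hm1
      + (Int.gcdB (w0 a) (s.gcd w0) : ℝ) * hm2

private lemma aux_primitive {d : ℕ} (w0 : Fin d → ℤ) (hprim : Finset.univ.gcd w0 = 1)
    (t : ℝ) (ht : ∀ i, ∃ m : ℤ, t * w0 i = m) : ∃ n : ℤ, t = n := by
  obtain ⟨m, hm⟩ := aux_gcd_mul w0 t ht Finset.univ
  rw [hprim] at hm
  exact ⟨m, by simpa using hm⟩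

private lemma aux_limit (c : ℝ) (hc : c ≠ 0) :
    Tendsto (fun ε : ℝ => (ε * c) * (1 - Real.exp (ε * c))⁻¹)
      (nhdsWithin 0 {0}ᶜ) (nhds (-1)) := by
  have h1 : Tendsto (slope Real.exp 0) (nhdsWithin 0 {0}ᶜ) (nhds 1) := by
    have := (Real.hasDerivAt_exp 0)
    rw [hasDerivAt_iff_tendsto_slope] at this
    simpa using this
  have h2 : Tendsto (fun t : ℝ => -(slope Real.exp 0 t)⁻¹) (nhdsWithin 0 {0}ᶜ) (nhds (-1)) := by
    simpa using (h1.inv₀ one_ne_zero).neg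
  have h3 : Tendsto (fun t : ℝ => t * (1 - Real.exp t)⁻¹) (nhdsWithin 0 {0}ᶜ) (nhds (-1)) := by
    refine h2.congr' ?_
    filter_upwards [self_mem_nhdsWithin] with t ht
    have ht' : t ≠ 0 := ht
    have hexp : Real.exp t ≠ 1 := by
      simpa [Real.exp_eq_one_iff] using ht'
    have hne : (1 : ℝ) - Real.exp t ≠ 0 := sub_ne_zero.mpr (Ne.symm hexp)
    have hne2 : Real.exp t - 1 ≠ 0 := sub_ne_zero.mpr hexp
    rw [slope_def_field, Real.exp_zero]
    field_simp
    ring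
  have h4 : Tendsto (fun ε : ℝ => ε * c) (nhdsWithin 0 {0}ᶜ) (nhdsWithin 0 {0}ᶜ) := by
    rw [tendsto_nhdsWithin_iff]
    constructor
    · have : Tendsto (fun ε : ℝ => ε * c) (nhds 0) (nhds (0 * c)) :=
        (continuous_id.mul continuous_const).tendsto 0
      simpa using this.mono_left nhdsWithin_le_nhds
    · filter_upwards [self_mem_nhdsWithin] with ε hε
      simp only [Set.mem_compl_iff, Set.mem_singleton_iff] at *
      exact mul_ne_zero hε hc
  exact h3.comp h4

private lemma aux_finite {d : ℕ} (v : Fin d → Fin d → ℝ) (s : Fin d → ℝ) :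
    Set.Finite {x : Fin d → ℝ |
      (∃ a : Fin d → ℝ, (∀ j, a j ∈ Set.Ico (0 : ℝ) 1) ∧ x = s + ∑ j, a j • v j) ∧
      ∀ i, ∃ m : ℤ, x i = (m : ℝ)} := by
  set R : Fin d → ℝ := fun i => ∑ j, |v j i| with hR
  set lo : Fin d → ℤ := fun i => ⌈s i - R i⌉ with hlo
  set hi : Fin d → ℤ := fun i => ⌊s i + R i⌋ with hhi
  have key : ∀ x ∈ {x : Fin d → ℝ |
      (∃ a : Fin d → ℝ, (∀ j, a j ∈ Set.Ico (0 : ℝ) 1) ∧ x = s + ∑ j, a j • v j) ∧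
      ∀ i, ∃ m : ℤ, x i = (m : ℝ)},
      ∃ m : Fin d → ℤ, m ∈ Set.Icc lo hi ∧ x = fun i => (m i : ℝ) := by
    rintro x ⟨⟨a, ha, hx⟩, hint⟩
    choose m hm using hint
    refine ⟨m, ?_, funext hm⟩
    have hbd : ∀ i, |x i - s i| ≤ R i := by
      intro i
      have hxi : x i = s i + ∑ j, a j * v j i := by
        rw [hx]; simp [Finset.sum_apply]
      rw [hxi]
      simp only [add_sub_cancel_left]
      refine (Finset.abs_sum_le_sum_abs _ _).trans ?_
      apply Finset.sum_le_sum
      intro j _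
      rw [abs_mul]
      have h0 := (ha j).1
      have h1 := (ha j).2
      nlinarith [abs_nonneg (v j i), abs_of_nonneg h0]
    constructor
    · intro i
      have h := hbd i
      rw [hm i] at h
      have : s i - R i ≤ (m i : ℝ) := by cases abs_le.mp h; linarith
      exact Int.ceil_le.mpr this
    · intro i
      have h := hbd i
      rw [hm i] at h
      have : (m i : ℝ) ≤ s i + R i := by cases abs_le.mp h; linarith
      exact Int.le_floor.mpr this
  have hsub : {x : Fin d → ℝ |
      (∃ a : Fin d → ℝ, (∀ j, a j ∈ Set.Ico (0 : ℝ) 1) ∧ x = s + ∑ j, a j • v j) ∧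
      ∀ i, ∃ m : ℤ, x i = (m : ℝ)}
      ⊆ (fun m : Fin d → ℤ => fun i => (m i : ℝ)) '' (Set.Icc lo hi) := by
    intro x hx
    obtain ⟨m, hm1, hm2⟩ := key x hx
    exact ⟨m, hm1, hm2.symm⟩
  exact Set.Finite.subset ((Set.finite_Icc lo hi).image _) hsub

private lemma aux_bij {d : ℕ} [NeZero d] (w : Fin d → Fin d → ℤ) (v : Fin d → Fin d → ℝ)
    (s : Fin d → ℝ)
    (hvw : ∀ j, v j = fun i => (w j i : ℝ))
    (hindep : LinearIndependent ℝ v) (hprim : Finset.univ.gcd (w 0) = 1) :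
    Function.Bijective (fun x : {x : Fin d → ℝ //
        (∃ a : Fin d → ℝ, (∀ j, a j ∈ Set.Ico (0 : ℝ) 1) ∧
          x = s + ∑ j, a j • v j) ∧ ∀ i, ∃ m : ℤ, x i = (m : ℝ)} =>
      (⟨(Submodule.span ℝ {v 0}).mkQ x,
        ⟨(x : Fin d → ℝ), x.2.1, rfl⟩, ⟨(x : Fin d → ℝ), x.2.2, rfl⟩⟩ :
        {y : (Fin d → ℝ) ⧸ Submodule.span ℝ {v 0} //
          y ∈ (Submodule.span ℝ {v 0}).mkQ ''
            {x : Fin d → ℝ | ∃ a : Fin d → ℝ,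
              (∀ j, a j ∈ Set.Ico (0 : ℝ) 1) ∧ x = s + ∑ j, a j • v j} ∧
          y ∈ (Submodule.span ℝ {v 0}).mkQ ''
            {x : Fin d → ℝ | ∀ i, ∃ m : ℤ, x i = (m : ℝ)}})) := by
  constructor
  · -- injective
    rintro ⟨x, ⟨a, ha, hxa⟩, hxint⟩ ⟨x', ⟨a', ha', hxa'⟩, hxint'⟩ h
    simp only [Subtype.mk.injEq, Submodule.mkQ_apply] at h
    rw [Submodule.Quotient.eq] at h
    obtain ⟨t, ht⟩ := Submodule.mem_span_singleton.mp h
    obtain ⟨n, hn⟩ := aux_primitive (w 0) hprim t (by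
      intro i
      obtain ⟨mi, hmi⟩ := hxint i
      obtain ⟨mi', hmi'⟩ := hxint' i
      refine ⟨mi - mi', ?_⟩
      have hxx : t * v 0 i = x i - x' i := by
        have := congrFun ht i
        simpa [smul_eq_mul] using this
      rw [hvw 0] at hxx
      push_cast
      rw [hxx, hmi, hmi'])
    have hsum : ∑ j, (a j - a' j - (if j = 0 then t else 0)) • v j = 0 := by
      have e1 : ∑ j, (if j = 0 then t else 0) • v j = t • v 0 := by
        rw [Finset.sum_eq_single 0]
        · simp
        · intro b _ hb; simp [hb]
        · simp
      simp only [sub_smul, Finset.sum_sub_distrib, e1]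
      have hxx : x - x' = (∑ j, a j • v j) - ∑ j, a' j • v j := by
        rw [hxa, hxa']; abel
      rw [← hxx, ← ht]
      abel
    have hcoef := Fintype.linearIndependent_iff.mp hindep _ hsum
    have h0 : a 0 - a' 0 - t = 0 := by simpa using hcoef 0
    have ht01 : t = a 0 - a' 0 := by linarith
    have hb1 := (ha 0).1; have hb2 := (ha 0).2
    have hb3 := (ha' 0).1; have hb4 := (ha' 0).2
    have hn0 : n = 0 := by
      have h1 : (n : ℝ) < 1 := by rw [← hn]; linarith
      have h2 : (-1 : ℝ) < n := by rw [← hn]; linarith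
      have h1' : n < 1 := by exact_mod_cast h1
      have h2' : -1 < n := by exact_mod_cast h2
      omega
    have ht0 : t = 0 := by rw [hn, hn0]; simp
    rw [ht0, zero_smul] at ht
    exact Subtype.ext (sub_eq_zero.mp ht.symm)
  · -- surjective
    rintro ⟨y, ⟨xb, ⟨a, ha, hxa⟩, hxb⟩, ⟨xl, hxl, hxly⟩⟩
    have h : (Submodule.span ℝ {v 0}).mkQ xb = (Submodule.span ℝ {v 0}).mkQ xl := by
      rw [hxb, hxly]
    simp only [Submodule.mkQ_apply] at h
    rw [Submodule.Quotient.eq] at h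
    obtain ⟨t, ht⟩ := Submodule.mem_span_singleton.mp h
    set n : ℤ := ⌈t - a 0⌉ with hn
    set x : Fin d → ℝ := xl + (n : ℝ) • v 0 with hxdef
    have hx_box : ∃ a' : Fin d → ℝ, (∀ j, a' j ∈ Set.Ico (0 : ℝ) 1) ∧
        x = s + ∑ j, a' j • v j := by
      refine ⟨fun j => if j = 0 then a 0 + ((n : ℝ) - t) else a j, ?_, ?_⟩
      · intro j
        by_cases hj : j = 0
        · subst hj
          simp only [if_pos rfl]
          constructor
          · have := Int.le_ceil (t - a 0); rw [← hn] at this; simpa using by linarith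
          · have := Int.ceil_lt_add_one (t - a 0); rw [← hn] at this; simpa using by linarith
        · simpa [hj] using ha j
      · have hsum : ∑ j, (if j = 0 then a 0 + ((n:ℝ) - t) else a j) • v j
            = (∑ j, a j • v j) + ((n:ℝ) - t) • v 0 := by
          have hterm : ∀ j ∈ Finset.univ, (if j = 0 then a 0 + ((n:ℝ) - t) else a j) • v j
              = a j • v j + (if j = 0 then ((n:ℝ) - t) • v 0 else 0) := by
            intro j _
            by_cases hj : j = 0
            · subst hj; simp [add_smul]
            · simp [hj]
          rw [Finset.sum_congr rfl hterm, Finset.sum_add_distrib]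
          congr 1
          rw [Finset.sum_eq_single 0] <;> simp +contextual
        have hxl2 : xl = xb - t • v 0 := by rw [ht]; abel
        have hxl' : xl = s + ∑ j, a j • v j - t • v 0 := by rw [hxl2, hxa]
        rw [hxdef, hsum, hxl']
        module
    have hx_int : ∀ i, ∃ m : ℤ, x i = (m : ℝ) := by
      intro i
      obtain ⟨mi, hmi⟩ := hxl i
      refine ⟨mi + n * w 0 i, ?_⟩
      rw [hxdef]
      simp only [Pi.add_apply, Pi.smul_apply, smul_eq_mul, hvw 0]
      push_cast
      rw [hmi]
    refine ⟨⟨x, hx_box, hx_int⟩, ?_⟩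
    apply Subtype.ext
    simp only [Submodule.mkQ_apply]
    rw [hxdef, ← hxly]
    simp only [Submodule.mkQ_apply]
    rw [Submodule.Quotient.eq]
    have hxx : xl + (n : ℝ) • v 0 - xl = (n : ℝ) • v 0 := by abel
    rw [hxx]
    exact Submodule.smul_mem _ (n : ℝ) (Submodule.mem_span_singleton_self (v 0))

/-- Residue of the discrete generating function of a full-dimensional simplicial
affine cone `a = s + c` along a primitive edge `v₀`:
`(⟨ξ,v₀⟩ S(a)(ξ))|_{v₀^⊥} = - S(proj_{V/ℝv₀} a)(ξ̄)`, where
`S(a)(ξ) = (∑_{x ∈ (s+box) ∩ Λ} e^{⟨ξ,x⟩}) ∏_j (1 - e^{⟨ξ,v_j⟩})⁻¹` and the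
projected cone carries the projected lattice. The restriction to `v₀^⊥` is
expressed as a limit along `ξ + ε η` with `⟨η,v₀⟩ ≠ 0`. -/
theorem stmt15 (d : ℕ) [NeZero d] (w : Fin d → Fin d → ℤ) (v : Fin d → Fin d → ℝ)
    (hvw : ∀ j, v j = fun i => (w j i : ℝ))
    (hindep : LinearIndependent ℝ v)
    (hprim : Finset.univ.gcd (w 0) = 1)
    (s : Fin d → ℝ)
    (ξ η : (Fin d → ℝ) →ₗ[ℝ] ℝ)
    (hξ0 : Submodule.span ℝ {v 0} ≤ LinearMap.ker ξ)
    (hξj : ∀ j : Fin d, j ≠ 0 → Real.exp (ξ (v j)) ≠ 1)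
    (hη : η (v 0) ≠ 0) :
    Tendsto
      (fun ε : ℝ =>
        (ξ + ε • η) (v 0) *
          ((∑' x : {x : Fin d → ℝ //
              (∃ a : Fin d → ℝ, (∀ j, a j ∈ Set.Ico (0 : ℝ) 1) ∧
                x = s + ∑ j, a j • v j) ∧
              ∀ i, ∃ m : ℤ, x i = (m : ℝ)},
              Real.exp ((ξ + ε • η) (x : Fin d → ℝ))) *
            ∏ j, (1 - Real.exp ((ξ + ε • η) (v j)))⁻¹))
      (nhdsWithin 0 {0}ᶜ)
      (nhds
        (-((∑' y : {y : (Fin d → ℝ) ⧸ Submodule.span ℝ {v 0} //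
              y ∈ (Submodule.span ℝ {v 0}).mkQ ''
                {x : Fin d → ℝ | ∃ a : Fin d → ℝ,
                  (∀ j, a j ∈ Set.Ico (0 : ℝ) 1) ∧ x = s + ∑ j, a j • v j} ∧
              y ∈ (Submodule.span ℝ {v 0}).mkQ ''
                {x : Fin d → ℝ | ∀ i, ∃ m : ℤ, x i = (m : ℝ)}},
              Real.exp ((Submodule.span ℝ {v 0}).liftQ ξ hξ0
                (y : (Fin d → ℝ) ⧸ Submodule.span ℝ {v 0}))) *
            ∏ j ∈ Finset.univ.erase 0, (1 - Real.exp (ξ (v j)))⁻¹))) := by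
  classical
  have hξv0 : ξ (v 0) = 0 := hξ0 (Submodule.mem_span_singleton_self (v 0))
  have hfin : Finite {x : Fin d → ℝ //
      (∃ a : Fin d → ℝ, (∀ j, a j ∈ Set.Ico (0 : ℝ) 1) ∧
        x = s + ∑ j, a j • v j) ∧ ∀ i, ∃ m : ℤ, x i = (m : ℝ)} :=
    (aux_finite v s).to_subtype
  haveI := hfin
  haveI := Fintype.ofFinite {x : Fin d → ℝ //
      (∃ a : Fin d → ℝ, (∀ j, a j ∈ Set.Ico (0 : ℝ) 1) ∧
        x = s + ∑ j, a j • v j) ∧ ∀ i, ∃ m : ℤ, x i = (m : ℝ)}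
  set B := {x : Fin d → ℝ //
      (∃ a : Fin d → ℝ, (∀ j, a j ∈ Set.Ico (0 : ℝ) 1) ∧
        x = s + ∑ j, a j • v j) ∧ ∀ i, ∃ m : ℤ, x i = (m : ℝ)} with hB
  let e := Equiv.ofBijective _ (aux_bij w v s hvw hindep hprim)
  have hT : (∑' y : {y : (Fin d → ℝ) ⧸ Submodule.span ℝ {v 0} //
        y ∈ (Submodule.span ℝ {v 0}).mkQ ''
          {x : Fin d → ℝ | ∃ a : Fin d → ℝ,
            (∀ j, a j ∈ Set.Ico (0 : ℝ) 1) ∧ x = s + ∑ j, a j • v j} ∧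
        y ∈ (Submodule.span ℝ {v 0}).mkQ ''
          {x : Fin d → ℝ | ∀ i, ∃ m : ℤ, x i = (m : ℝ)}},
        Real.exp ((Submodule.span ℝ {v 0}).liftQ ξ hξ0
          (y : (Fin d → ℝ) ⧸ Submodule.span ℝ {v 0})))
      = ∑ x : B, Real.exp (ξ (x : Fin d → ℝ)) := by
    rw [← Equiv.tsum_eq e, tsum_fintype]
    apply Finset.sum_congr rfl
    intro x _
    congr 1
  have happ : ∀ (ε : ℝ) (z : Fin d → ℝ), (ξ + ε • η) z = ξ z + ε * η z := by
    intro ε z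
    simp [LinearMap.add_apply, LinearMap.smul_apply, smul_eq_mul]
  have hfun : ∀ ε : ℝ,
      (ξ + ε • η) (v 0) *
        ((∑' x : B, Real.exp ((ξ + ε • η) (x : Fin d → ℝ))) *
          ∏ j, (1 - Real.exp ((ξ + ε • η) (v j)))⁻¹)
      = ((ε * η (v 0)) * (1 - Real.exp (ε * η (v 0)))⁻¹) *
          ((∑ x : B, Real.exp (ξ (x : Fin d → ℝ) + ε * η (x : Fin d → ℝ))) *
            ∏ j ∈ Finset.univ.erase 0, (1 - Real.exp (ξ (v j) + ε * η (v j)))⁻¹) := by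
    intro ε
    rw [tsum_fintype]
    rw [← Finset.mul_prod_erase Finset.univ _ (Finset.mem_univ 0)]
    simp only [happ, hξv0, zero_add]
    ring
  rw [hT]
  have htarget : -((∑ x : B, Real.exp (ξ (x : Fin d → ℝ))) *
        ∏ j ∈ Finset.univ.erase 0, (1 - Real.exp (ξ (v j)))⁻¹)
      = (-1) * ((∑ x : B, Real.exp (ξ (x : Fin d → ℝ))) *
        ∏ j ∈ Finset.univ.erase 0, (1 - Real.exp (ξ (v j)))⁻¹) := by ring
  rw [htarget]
  refine Tendsto.congr (fun ε => (hfun ε).symm) ?_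
  apply Tendsto.mul
  · exact aux_limit _ hη
  · have hS : Tendsto (fun ε : ℝ => ∑ x : B, Real.exp (ξ (x : Fin d → ℝ) + ε * η (x : Fin d → ℝ)))
        (nhds 0) (nhds (∑ x : B, Real.exp (ξ (x : Fin d → ℝ)))) := by
      apply tendsto_finset_sum
      intro x _
      have h := (Real.continuous_exp.comp (continuous_const.add
        (continuous_id.mul continuous_const))).tendsto (0 : ℝ)
        (f := fun ε : ℝ => Real.exp (ξ (x : Fin d → ℝ) + ε * η (x : Fin d → ℝ)))
      simpa using h
    have hP : Tendsto (fun ε : ℝ => ∏ j ∈ Finset.univ.erase 0,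
          (1 - Real.exp (ξ (v j) + ε * η (v j)))⁻¹) (nhds 0)
        (nhds (∏ j ∈ Finset.univ.erase 0, (1 - Real.exp (ξ (v j)))⁻¹)) := by
      apply tendsto_finset_prod
      intro j hj
      have hne : (1 : ℝ) - Real.exp (ξ (v j)) ≠ 0 :=
        sub_ne_zero.mpr (Ne.symm (hξj j (Finset.ne_of_mem_erase hj)))
      have h1 : Tendsto (fun ε : ℝ => 1 - Real.exp (ξ (v j) + ε * η (v j))) (nhds 0)
          (nhds (1 - Real.exp (ξ (v j) + 0 * η (v j)))) :=
        (continuous_const.sub (Real.continuous_exp.comp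
          (continuous_const.add (continuous_id.mul continuous_const)))).tendsto 0
      have h2 := (h1.inv₀ (by simpa using hne))
      simpa using h2
    exact (hS.mul hP).mono_left nhdsWithin_le_nhds
end

section
/- Let L ⊆ V be a subspace spanned by a subset of Δ. The space G_{Δ∩L}, spanned by fractions 1/∏_{j∈J} v_j^{n_j} with n_j > 0, v_j ∈ L, and (v_j, j∈J) spanning L, is already spanned by such fractions 1/∏_{j∈J} v_j^{n_j} in which (v_j, j∈J) is a basis of L. In particular, 1/((v₁+v₂) v₁ v₂) = 1/((v₁+v₂)² v₂) + 1/((v₁+v₂)² v₁) as rational functions of ξ, where v_i stands for the linear form ⟨ξ, v_i⟩. -/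
/-!
If the vectors `v_j` occurring in a denominator `∏ v_j ^ n_j` are linearly dependent, say
`∑_{j ∈ C} c_j v_j = 0`, then `∑_{j ∈ C} c_j v_j(ξ) = 0` as well, and dividing this relation by
`v_i(ξ) ∏ v_j(ξ) ^ n_j` for a fixed `i ∈ C` writes `1 / ∏ v_j ^ n_j` as a combination of the
fractions in which one factor `v_j` is traded for a factor `v_i` (`j ∈ C`, `j ≠ i`). Each new
family of denominator vectors still spans `L`, since `v_j` lies in the span of the other `v_k`,
`k ∈ C`. Choosing `i` of least index in `C` makes `∑ n_j j` drop, so the rewriting terminates, and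
it can only stop at independent families.
-/

/-- The linear form `ξ ↦ ⟨ξ, u⟩` on `V*`, as a polynomial. -/
noncomputable def linForm {K : Type*} [Field K] {d : ℕ} (u : Fin d → K) :
    MvPolynomial (Fin d) K :=
  ∑ i, MvPolynomial.C (u i) * MvPolynomial.X i

open Function Finset

section Exponents

variable {ι : Type*} [DecidableEq ι]

def transferOne (n : ι → ℕ) (j i : ι) : ι → ℕ := n + Pi.single i 1 - Pi.single j 1

lemma transferOne_add_single {n : ι → ℕ} {j : ι} (hj : n j ≠ 0) (i : ι) :
    transferOne n j i + Pi.single j 1 = n + Pi.single i 1 := by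
  refine tsub_add_cancel_of_le fun k => ?_
  rcases eq_or_ne k j with rfl | hk
  · simp only [Pi.add_apply, Pi.single_eq_same]; omega
  · simp [Pi.single_apply, hk]

lemma transferOne_self (n : ι → ℕ) (i : ι) : transferOne n i i = n :=
  add_tsub_cancel_right n _

lemma support_transferOne_subset {n : ι → ℕ} {i : ι} (hi : n i ≠ 0) (j : ι) :
    support (transferOne n j i) ⊆ support n := by
  intro k hk
  simp only [transferOne, mem_support, Pi.sub_apply, Pi.add_apply, Pi.single_apply] at hk ⊢
  split_ifs at hk <;> subst_vars <;> omega

lemma transferOne_ne_zero {n : ι → ℕ} {k j : ι} (hk : n k ≠ 0) (hkj : k ≠ j) (i : ι) :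
    transferOne n j i k ≠ 0 := by
  simp only [transferOne, Pi.sub_apply, Pi.add_apply, Pi.single_apply, hkj, if_false]
  omega

variable [Fintype ι]

lemma prod_pow_add_single {M : Type*} [CommMonoid M] (f : ι → M) (m : ι → ℕ) (j : ι) :
    ∏ k, f k ^ (m + Pi.single j 1 : ι → ℕ) k = (∏ k, f k ^ m k) * f j := by
  simp only [Pi.add_apply, pow_add, prod_mul_distrib, Pi.single_apply, pow_ite, pow_one, pow_zero,
    prod_ite_eq', mem_univ, if_true]

lemma sum_mul_add_single (w m : ι → ℕ) (j : ι) :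
    ∑ k, (m + Pi.single j 1 : ι → ℕ) k * w k = ∑ k, m k * w k + w j := by
  simp [add_mul, sum_add_distrib, Pi.single_apply, ite_mul]

end Exponents

lemma range_subtype_ne_zero_eq_image_support {ι α : Type*} (v : ι → α) (n : ι → ℕ) :
    Set.range (fun j : {j // n j ≠ 0} => v j) = v '' support n :=
  (Set.image_eq_range _ _).symm

section Dependence

open Submodule

variable {K V ι : Type*} [DivisionRing K] [AddCommGroup V] [Module K V]

lemma Submodule.mem_of_sum_smul_eq_zero [DecidableEq ι] {p : Submodule K V} {C : Finset ι}
    {c : ι → K} {x : ι → V} (hrel : ∑ j ∈ C, c j • x j = 0) {i : ι} (hi : i ∈ C)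
    (hci : c i ≠ 0) (hx : ∀ j ∈ C.erase i, x j ∈ p) : x i ∈ p := by
  have hxi : c i • x i = -∑ j ∈ C.erase i, c j • x j :=
    eq_neg_of_add_eq_zero_left ((add_sum_erase C _ hi).trans hrel)
  rw [← p.smul_mem_iff hci, hxi]
  exact p.neg_mem (p.sum_mem fun j hj => p.smul_mem _ (hx j hj))

lemma Submodule.span_image_eq_of_mem_span {v : ι → V} {s t : Set ι} {j : ι} (hts : t ⊆ s)
    (hst : s ⊆ insert j t) (hj : v j ∈ span K (v '' t)) :
    span K (v '' s) = span K (v '' t) := by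
  refine le_antisymm ?_ (span_mono (Set.image_mono hts))
  calc span K (v '' s) ≤ span K (v '' insert j t) := span_mono (Set.image_mono hst)
    _ = span K (v '' t) := by rw [Set.image_insert_eq, span_insert_eq_span hj]

lemma span_image_support_transferOne [DecidableEq ι] {v : ι → V} {n : ι → ℕ} {C : Finset ι}
    {c : ι → K} (hrel : ∑ k ∈ C, c k • v k = 0) (hC : ∀ k ∈ C, n k ≠ 0) {i j : ι}
    (hi : i ∈ C) (hj : j ∈ C) (hcj : c j ≠ 0) :
    span K (v '' support (transferOne n j i)) = span K (v '' support n) := by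
  refine (span_image_eq_of_mem_span (j := j) (support_transferOne_subset (hC i hi) j) ?_ ?_).symm
  · intro k hk
    rcases eq_or_ne k j with rfl | hkj
    · exact Set.mem_insert k _
    · exact Set.mem_insert_of_mem j (transferOne_ne_zero hk hkj i)
  · refine mem_of_sum_smul_eq_zero hrel hj hcj fun k hk => subset_span ?_
    exact Set.mem_image_of_mem v
      (transferOne_ne_zero (hC k (mem_of_mem_erase hk)) (ne_of_mem_erase hk) i)

end Dependence

lemma sum_smul_inv_prod_pow_transferOne_eq_zero {K F ι : Type*} [CommSemiring K] [Field F]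
    [Algebra K F] [Fintype ι] [DecidableEq ι] {f : ι → F} {n : ι → ℕ} {C : Finset ι}
    {c : ι → K} (hrel : ∑ j ∈ C, c j • f j = 0) (hC : ∀ j ∈ C, n j ≠ 0)
    (hf : ∀ j ∈ C, f j ≠ 0) (i : ι) :
    ∑ j ∈ C, c j • (∏ k, f k ^ transferOne n j i k)⁻¹ = 0 := by
  have hterm : ∀ j ∈ C,
      (∏ k, f k ^ transferOne n j i k)⁻¹ = f j * ((∏ k, f k ^ n k) * f i)⁻¹ := by
    intro j hj
    rw [← prod_pow_add_single, ← transferOne_add_single (hC j hj), prod_pow_add_single, mul_inv_rev,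
      mul_inv_cancel_left₀ (hf j hj)]
  rw [sum_congr rfl fun j hj => by rw [hterm j hj, ← smul_mul_assoc], ← sum_mul, hrel, zero_mul]

section Fractions

variable {K V F ι : Type*} [Field K] [AddCommGroup V] [Module K V] [Field F] [Algebra K F]
  [Fintype ι] (φ : V →ₗ[K] F) (v : ι → V) (L : Submodule K V)

def spanningFractions : Set F :=
  {x | ∃ n : ι → ℕ, (∀ j, n j ≠ 0 → v j ∈ L) ∧
    Submodule.span K (Set.range fun j : {j // n j ≠ 0} => v j) = L ∧
    x = (∏ j, φ (v j) ^ n j)⁻¹}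

def basisFractions : Set F :=
  {x | ∃ n : ι → ℕ, (∀ j, n j ≠ 0 → v j ∈ L) ∧
    Submodule.span K (Set.range fun j : {j // n j ≠ 0} => v j) = L ∧
    LinearIndependent K (fun j : {j // n j ≠ 0} => v j) ∧
    x = (∏ j, φ (v j) ^ n j)⁻¹}

theorem inv_prod_pow_mem_span_basisFractions (n : ι → ℕ) (hnL : ∀ j, n j ≠ 0 → v j ∈ L)
    (hspan : Submodule.span K (Set.range fun j : {j // n j ≠ 0} => v j) = L) :
    (∏ j, φ (v j) ^ n j)⁻¹ ∈ Submodule.span K (basisFractions φ v L) := by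
  classical
  set w : ι → ℕ := fun k => Fintype.equivFin ι k
  induction hm : ∑ k, n k * w k using Nat.strong_induction_on generalizing n with
  | _ m ih =>
  by_cases hP : ∏ j, φ (v j) ^ n j = 0
  · simp [hP] -- a vanishing denominator gives the junk value `0⁻¹ = 0`
  have hf : ∀ j, n j ≠ 0 → φ (v j) ≠ 0 := fun j hj =>
    ne_zero_pow hj (prod_ne_zero_iff.mp hP j (mem_univ j))
  by_cases hli : LinearIndepOn K v (support n)
  · exact Submodule.subset_span ⟨n, hnL, hspan, hli, rfl⟩
  obtain ⟨c, hcn, hrel, hc0⟩ := linearDepOn_iff.mp hli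
  have hC : ∀ j ∈ c.support, n j ≠ 0 := fun j hj => hcn hj
  obtain ⟨i, hi, hmin⟩ := c.support.exists_min_image w (Finsupp.support_nonempty_iff.mpr hc0)
  have hrelF : ∑ j ∈ c.support, c j • φ (v j) = 0 := by
    simpa only [map_sum, map_smul, map_zero] using congrArg φ hrel
  have key := sum_smul_inv_prod_pow_transferOne_eq_zero hrelF hC (fun j hj => hf j (hC j hj)) i
  rw [← transferOne_self n i]
  refine Submodule.mem_of_sum_smul_eq_zero key hi (Finsupp.mem_support_iff.mp hi) fun j hj => ?_
  obtain ⟨hji, hj⟩ := mem_erase.mp hj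
  refine ih _ ?_ _ (fun k hk => hnL k (support_transferOne_subset (hC i hi) j hk)) ?_ rfl
  · have hwij : w i < w j := (hmin j hj).lt_of_ne fun h =>
      hji ((Fintype.equivFin ι).injective (Fin.ext h)).symm
    have hsum := sum_mul_add_single w (transferOne n j i) j
    rw [transferOne_add_single (hC j hj), sum_mul_add_single] at hsum
    omega
  · rw [range_subtype_ne_zero_eq_image_support, span_image_support_transferOne hrel hC hi hj
      (Finsupp.mem_support_iff.mp hj), ← range_subtype_ne_zero_eq_image_support, hspan]

theorem span_spanningFractions_eq :
    Submodule.span K (spanningFractions φ v L) = Submodule.span K (basisFractions φ v L) := by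
  refine le_antisymm (Submodule.span_le.mpr ?_) (Submodule.span_mono ?_)
  · rintro x ⟨n, hnL, hspan, rfl⟩
    exact inv_prod_pow_mem_span_basisFractions φ v L n hnL hspan
  · rintro x ⟨n, hnL, hspan, -, rfl⟩
    exact ⟨n, hnL, hspan, rfl⟩

end Fractions

noncomputable def linFormFrac (K : Type*) [Field K] (d : ℕ) :
    (Fin d → K) →ₗ[K] FractionRing (MvPolynomial (Fin d) K) where
  toFun u := algebraMap _ _ (linForm u)
  map_add' u w := by simp [linForm, add_mul, sum_add_distrib]
  map_smul' a u := by
    simp [linForm, Algebra.smul_def, mul_sum, mul_assoc,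
      IsScalarTower.algebraMap_apply K (MvPolynomial (Fin d) K)]

theorem stmt18_general {K : Type*} [Field K] (d N : ℕ)
    (v : Fin N → Fin d → K)
    (L : Submodule K (Fin d → K)) :
    (Submodule.span K
        {x : FractionRing (MvPolynomial (Fin d) K) | ∃ n : Fin N → ℕ,
          (∀ j, n j ≠ 0 → v j ∈ L) ∧
          Submodule.span K (Set.range fun j : {j : Fin N // n j ≠ 0} => v (j : Fin N)) = L ∧
          x = (∏ j, algebraMap (MvPolynomial (Fin d) K)
              (FractionRing (MvPolynomial (Fin d) K)) (linForm (v j)) ^ n j)⁻¹}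
      = Submodule.span K
        {x : FractionRing (MvPolynomial (Fin d) K) | ∃ n : Fin N → ℕ,
          (∀ j, n j ≠ 0 → v j ∈ L) ∧
          Submodule.span K (Set.range fun j : {j : Fin N // n j ≠ 0} => v (j : Fin N)) = L ∧
          LinearIndependent K (fun j : {j : Fin N // n j ≠ 0} => v (j : Fin N)) ∧
          x = (∏ j, algebraMap (MvPolynomial (Fin d) K)
              (FractionRing (MvPolynomial (Fin d) K)) (linForm (v j)) ^ n j)⁻¹})
      ∧
    ∀ a b : ℝ, a ≠ 0 → b ≠ 0 → a + b ≠ 0 →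
      1 / ((a + b) * a * b) = 1 / ((a + b) ^ 2 * b) + 1 / ((a + b) ^ 2 * a) :=
  ⟨span_spanningFractions_eq (linFormFrac K d) v L, fun a b ha hb hab => by field_simp⟩

/-- `G_{Δ∩L}` (spanned by fractions `1/∏_{j∈J} v_j^{n_j}` with `n_j > 0`, `v_j ∈ L`,
and `(v_j, j∈J)` spanning `L`) is already spanned by those fractions whose denominator
vectors form a basis of `L`; together with the two-dimensional instance
`1/((v₁+v₂)v₁v₂) = 1/((v₁+v₂)²v₂) + 1/((v₁+v₂)²v₁)`. -/
theorem stmt18 {K : Type*} [Field K] (d N : ℕ)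
    (v : Fin N → Fin d → K)
    (hnz : ∀ j, v j ≠ 0)
    (hncol : ∀ j k : Fin N, j ≠ k → ∀ c : K, v j ≠ c • v k)
    (L : Submodule K (Fin d → K))
    (hL : ∃ S : Set (Fin N), L = Submodule.span K (v '' S)) :
    (Submodule.span K
        {x : FractionRing (MvPolynomial (Fin d) K) | ∃ n : Fin N → ℕ,
          (∀ j, n j ≠ 0 → v j ∈ L) ∧
          Submodule.span K (Set.range fun j : {j : Fin N // n j ≠ 0} => v (j : Fin N)) = L ∧
          x = (∏ j, algebraMap (MvPolynomial (Fin d) K)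
              (FractionRing (MvPolynomial (Fin d) K)) (linForm (v j)) ^ n j)⁻¹}
      = Submodule.span K
        {x : FractionRing (MvPolynomial (Fin d) K) | ∃ n : Fin N → ℕ,
          (∀ j, n j ≠ 0 → v j ∈ L) ∧
          Submodule.span K (Set.range fun j : {j : Fin N // n j ≠ 0} => v (j : Fin N)) = L ∧
          LinearIndependent K (fun j : {j : Fin N // n j ≠ 0} => v (j : Fin N)) ∧
          x = (∏ j, algebraMap (MvPolynomial (Fin d) K)
              (FractionRing (MvPolynomial (Fin d) K)) (linForm (v j)) ^ n j)⁻¹})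
      ∧
    ∀ a b : ℝ, a ≠ 0 → b ≠ 0 → a + b ≠ 0 →
      1 / ((a + b) * a * b) = 1 / ((a + b) ^ 2 * b) + 1 / ((a + b) ^ 2 * a) :=
  stmt18_general d N v L
end
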